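/- Let γ : S¹ → S² be a C² closed curve with constant speed v > 0 bounded by |γ̇| ≤ C and with ‖γ‖_{C²} ≤ C. If γ(θ₁) = γ(θ₂) for θ₁ ≠ θ₂ in S¹ = ℝ/ℤ and γ is a C² limit of embedded curves, then there exists δ > 0 depending only on the C³ bound and the lower speed bound (not on γ) such that δ ≤ |θ₁ − θ₂| ≤ 1 − δ. -/

import Mathlib

/-!
A constant-speed curve turns slowly: with speed `v` and `‖γ''‖ ≤ C`, the second-order Taylor
estimate `‖γ t - γ s - (t - s) • γ' s‖ ≤ C (t - s)²` shows that `γ s = γ t` forces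
`v ≤ C |t - s|`. With `v ≥ 1 / C` this separates self-intersection parameters by `δ = 1 / C²`,
and periodicity turns the lower bound into the upper bound `1 - δ`, applied to `θ₁ + 1` and `θ₂`.
-/

open Real Filter Set

noncomputable section

/-- Euclidean 3-space, ambient space of the 2-sphere. -/
abbrev E3 := EuclideanSpace ℝ (Fin 3)

/-- The 2-sphere, as the unit sphere in `E3`. -/
def Sph : Set E3 := Metric.sphere 0 1

/-- A simple (embedded) closed curve of period 1 (`S¹ = ℝ/ℤ`). -/
def IsSimpleClosed (γ : ℝ → E3) : Prop :=
  Function.Periodic γ 1 ∧ Set.InjOn γ (Set.Ico (0:ℝ) 1)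

/-- Convergence in `C²(S¹, S²)`: uniform convergence of curves and of their
first and second derivatives. -/
def TendstoC2 (γn : ℕ → ℝ → E3) (γ : ℝ → E3) : Prop :=
  TendstoUniformly γn γ atTop ∧
  TendstoUniformly (fun n => deriv (γn n)) (deriv γ) atTop ∧
  TendstoUniformly (fun n => deriv (deriv (γn n))) (deriv (deriv γ)) atTop

theorem norm_sub_sub_smul_deriv_le {E : Type*} [NormedAddCommGroup E] [NormedSpace ℝ E]
    {f : ℝ → E} {C s t : ℝ} (hf : Differentiable ℝ f) (hf' : Differentiable ℝ (deriv f))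
    (hC : ∀ u, ‖deriv (deriv f) u‖ ≤ C) (hst : s ≤ t) :
    ‖f t - f s - (t - s) • deriv f s‖ ≤ C * (t - s) ^ 2 := by
  have hC₀ : 0 ≤ C := (norm_nonneg _).trans (hC s)
  have hslope : ∀ u ∈ Ico s t, ‖deriv f u - deriv f s‖ ≤ C * (t - s) := fun u hu => by
    have := norm_image_sub_le_of_norm_deriv_le_segment'
      (fun x _ => (hf' x).hasDerivAt.hasDerivWithinAt) (fun x _ => hC x) u (Ico_subset_Icc_self hu)
    exact this.trans (by gcongr; exact hu.2.le)
  have hg : ∀ u ∈ Icc s t, HasDerivWithinAt (fun u => f u - u • deriv f s)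
      (deriv f u - deriv f s) (Icc s t) u := fun u _ =>
    ((hf u).hasDerivAt.sub ((hasDerivAt_id u).smul_const _)
      |>.congr_deriv (by simp)).hasDerivWithinAt
  have hremainder := norm_image_sub_le_of_norm_deriv_le_segment' hg hslope t (right_mem_Icc.2 hst)
  calc ‖f t - f s - (t - s) • deriv f s‖
      = ‖(f t - t • deriv f s) - (f s - s • deriv f s)‖ := by rw [sub_smul]; congr 1; abel
    _ ≤ C * (t - s) * (t - s) := hremainder
    _ = C * (t - s) ^ 2 := by ring

theorem speed_le_mul_abs_sub_of_eq {E : Type*} [NormedAddCommGroup E] [NormedSpace ℝ E]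
    {f : ℝ → E} {C v s t : ℝ} (hf : Differentiable ℝ f) (hf' : Differentiable ℝ (deriv f))
    (hv : ∀ u, ‖deriv f u‖ = v) (hC : ∀ u, ‖deriv (deriv f) u‖ ≤ C)
    (hst : s ≠ t) (heq : f s = f t) :
    v ≤ C * |t - s| := by
  wlog hlt : s < t generalizing s t
  · rw [abs_sub_comm]; exact this hst.symm heq.symm (hst.lt_or_gt.resolve_left hlt)
  have htaylor := norm_sub_sub_smul_deriv_le hf hf' hC hlt.le
  rw [heq, sub_self, zero_sub, norm_neg, norm_smul, hv, Real.norm_eq_abs,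
    abs_of_pos (sub_pos.2 hlt)] at htaylor
  rw [abs_of_pos (sub_pos.2 hlt)]
  nlinarith [sub_pos.2 hlt]

theorem abs_sub_le_one_sub_of_periodic {α : Type*} {f : ℝ → α} {δ θ₁ θ₂ : ℝ}
    (hper : Function.Periodic f 1) (hsep : ∀ s t, s ≠ t → f s = f t → δ ≤ |s - t|)
    (hθ₁ : θ₁ ∈ Ico (0 : ℝ) 1) (hθ₂ : θ₂ ∈ Ico (0 : ℝ) 1) (heq : f θ₁ = f θ₂) :
    |θ₁ - θ₂| ≤ 1 - δ := by
  wlog hle : θ₁ ≤ θ₂ generalizing θ₁ θ₂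
  · rw [abs_sub_comm]; exact this hθ₂ hθ₁ heq.symm (le_of_not_ge hle)
  have := hsep (θ₁ + 1) θ₂ (by linarith [hθ₁.1, hθ₂.2]) ((hper θ₁).trans heq)
  rw [abs_of_nonneg (by linarith [hθ₁.1, hθ₂.2])] at this
  rw [abs_of_nonpos (by linarith)]
  linarith

/-- there is `δ > 0`, depending only on the `C³` bound `C` and
the lower speed bound `1/C` (not on the curve), such that any `C³` closed
curve `γ` on `S²` with constant speed `v ≥ 1/C`, `C³`-norm at most `C`, which
is a `C²`-limit of embedded curves, has any self-intersection parameters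
`θ₁ ≠ θ₂` (in `S¹ = ℝ/ℤ`, represented in `[0,1)`) separated:
`δ ≤ |θ₁ − θ₂| ≤ 1 − δ`. -/
theorem uniform_separation_of_self_intersections
    (C : ℝ) (hC : 0 < C) :
    ∃ δ > (0:ℝ), ∀ (γ : ℝ → E3) (v : ℝ),
      ContDiff ℝ 3 γ → Function.Periodic γ 1 → (∀ t, γ t ∈ Sph) →
      (∀ t, ‖deriv γ t‖ = v) → 1 / C ≤ v →
      (∀ t, ‖deriv γ t‖ ≤ C ∧ ‖deriv (deriv γ) t‖ ≤ C ∧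
        ‖deriv (deriv (deriv γ)) t‖ ≤ C) →
      (∃ γn : ℕ → ℝ → E3,
        (∀ n, IsSimpleClosed (γn n) ∧ ∀ t, γn n t ∈ Sph) ∧ TendstoC2 γn γ) →
      ∀ θ₁ ∈ Set.Ico (0:ℝ) 1, ∀ θ₂ ∈ Set.Ico (0:ℝ) 1,
        θ₁ ≠ θ₂ → γ θ₁ = γ θ₂ →
        δ ≤ |θ₁ - θ₂| ∧ |θ₁ - θ₂| ≤ 1 - δ := by
  refine ⟨1 / C ^ 2, by positivity, ?_⟩
  intro γ v hγ hper _ hv hvC hbnd _ θ₁ hθ₁ θ₂ hθ₂ hne heq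
  have hsep : ∀ s t, s ≠ t → γ s = γ t → 1 / C ^ 2 ≤ |s - t| := by
    intro s t hst hγst
    have hspeed := speed_le_mul_abs_sub_of_eq (hγ.differentiable (by norm_num))
      ((hγ.iterate_deriv' 2 1).differentiable (by norm_num)) hv (fun u => (hbnd u).2.1)
      hst.symm hγst.symm
    rw [div_le_iff₀ (by positivity)]
    calc 1 = C * (1 / C) := by field_simp
      _ ≤ C * (C * |s - t|) := by gcongr; exact hvC.trans hspeed
      _ = |s - t| * C ^ 2 := by ring
  exact ⟨hsep θ₁ θ₂ hne heq, abs_sub_le_one_sub_of_periodic hper hsep hθ₁ hθ₂ heq⟩
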